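/- arXiv:1301.3972 — 3 statements merged into one kernel-verified Lean document; each statement's English description precedes it below -/
import Mathlib

section
/- Let G be a group, H a normal subgroup of G, and T a finite Z[G/H]-module. Then there is a finitely generated free Z[G/H]-module A and a surjective Z[G/H]-module homomorphism A → T whose kernel A₁ is, as an abelian group, free of the same finite rank as A. -/
/-!
The kernel `A₁` of a surjection `A → T` has finite index in `A`, which is a free abelian group
(of possibly infinite rank). Over a PID a submodule `N` of a free module with finitely generated
quotient is free: finitely many basis vectors span a free direct summand `F` with `F + N = A`,
so `N` maps onto the free module `A / F` with kernel `N ∩ F`, which is free as a submodule of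
the finite free module `F`; the surjection onto `A / F` splits. Since `A / A₁` is torsion,
`A₁` and `A` have the same rank.
-/

open Submodule

theorem Module.Free.of_surjective_of_free_ker {R M P : Type*} [Ring R]
    [AddCommGroup M] [Module R M] [AddCommGroup P] [Module R P]
    (f : M →ₗ[R] P) (hf : Function.Surjective f) [Module.Free R P]
    [Module.Free R (LinearMap.ker f)] :
    Module.Free R M := by
  obtain ⟨s, hs⟩ := f.exists_rightInverse_of_surjective (LinearMap.range_eq_top.2 hf)
  exact .of_equiv (lequivProdOfRightSplitExact (LinearMap.ker f).injective_subtype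
    (range_subtype _) hs)

theorem Finsupp.exists_finset_supported_sup_eq_top {R ι : Type*} [Ring R]
    (N : Submodule R (ι →₀ R)) [Module.Finite R ((ι →₀ R) ⧸ N)] :
    ∃ S : Finset ι, supported R R (S : Set ι) ⊔ N = ⊤ := by
  classical
  obtain ⟨s, hs⟩ := Module.Finite.fg_top (R := R) (M := (ι →₀ R) ⧸ N)
  choose lift hlift using N.mkQ_surjective
  refine ⟨s.biUnion fun q => (lift q).support, ?_⟩
  rw [sup_comm, ← map_mkQ_eq_top, eq_top_iff, ← hs, span_le]
  intro q hq
  refine ⟨lift q, ?_, hlift q⟩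
  rw [SetLike.mem_coe, mem_supported]
  intro i hi
  simp only [Finset.coe_biUnion, Finset.mem_coe, Set.mem_iUnion]
  exact ⟨q, hq, hi⟩

theorem Finsupp.free_quotient_supported {R ι : Type*} [Ring R] (s : Set ι) :
    Module.Free R ((ι →₀ R) ⧸ supported R R s) :=
  .of_equiv ((quotientEquivOfIsCompl _ _
    (isCompl_iff.2 ⟨disjoint_supported_supported isCompl_compl.disjoint,
      codisjoint_supported_supported isCompl_compl.codisjoint⟩)).trans
    (supportedEquivFinsupp sᶜ)).symm

section PID

variable {R : Type*} [CommRing R] [IsDomain R] [IsPrincipalIdealRing R]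

theorem Finsupp.free_of_le_supported {ι : Type*} {s : Set ι} (hs : s.Finite)
    {N : Submodule R (ι →₀ R)} (hN : N ≤ supported R R s) : Module.Free R N :=
  have := hs.to_subtype
  .of_basis (basisOfPidOfLE hN (Finsupp.basisSingleOne.map (supportedEquivFinsupp s).symm)).2

theorem Finsupp.free_of_finite_quotient {ι : Type*} (N : Submodule R (ι →₀ R))
    [Module.Finite R ((ι →₀ R) ⧸ N)] : Module.Free R N := by
  obtain ⟨S, hS⟩ := exists_finset_supported_sup_eq_top N
  let φ := (supported R R (S : Set ι)).mkQ ∘ₗ N.subtype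
  have hφ : Function.Surjective φ := by
    rw [← LinearMap.range_eq_top, LinearMap.range_comp, range_subtype, map_mkQ_eq_top, hS]
  have hker : (LinearMap.ker φ).map N.subtype ≤ supported R R (S : Set ι) := by
    rw [LinearMap.ker_comp, ker_mkQ]
    exact map_comap_le _ _
  have := free_of_le_supported S.finite_toSet hker
  have : Module.Free R (LinearMap.ker φ) :=
    .of_equiv (equivMapOfInjective _ N.injective_subtype _).symm
  have := free_quotient_supported (R := R) (S : Set ι)
  exact .of_surjective_of_free_ker (M := N) φ hφ

theorem Submodule.free_of_finite_quotient {M : Type*} [AddCommGroup M] [Module R M]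
    [Module.Free R M] (N : Submodule R M) [Module.Finite R (M ⧸ N)] : Module.Free R N := by
  let e := (Module.Free.chooseBasis R M).repr
  have : Module.Finite R (_ ⧸ N.map e.toLinearMap) := .equiv (Quotient.equiv N _ e rfl)
  have := Finsupp.free_of_finite_quotient (N.map e.toLinearMap)
  exact .of_equiv (e.submoduleMap N).symm

end PID

theorem Submodule.rank_eq_of_isTorsion_quotient {R M : Type*} [CommRing R] [IsDomain R]
    [AddCommGroup M] [Module R M] (N : Submodule R M) (h : Module.IsTorsion R (M ⧸ N)) :
    Module.rank R N = Module.rank R M := by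
  rw [← rank_quotient_add_rank_of_isDomain N, h.rank_eq_zero, zero_add]

/-- Let `G` be a group, `H` a normal subgroup and `T` a finite
`ℤ[G/H]`-module.  Then there is a finitely generated free `ℤ[G/H]`-module `A`
(modelled as `Fin n → ℤ[G/H]`) and a surjective `ℤ[G/H]`-linear map `A → T` whose
kernel is, as an abelian group, free of the same rank as `A`. -/
theorem finite_module_surjection_from_free
    (G : Type*) [Group G] (H : Subgroup G) [H.Normal]
    (T : Type*) [AddCommGroup T] [Module (MonoidAlgebra ℤ (G ⧸ H)) T] [Finite T] :
    ∃ (n : ℕ)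
      (f : (Fin n → MonoidAlgebra ℤ (G ⧸ H)) →ₗ[MonoidAlgebra ℤ (G ⧸ H)] T),
      Function.Surjective f ∧
      Module.Free ℤ (LinearMap.ker f) ∧
      Module.rank ℤ (LinearMap.ker f) =
        Module.rank ℤ (Fin n → MonoidAlgebra ℤ (G ⧸ H)) := by
  have : Module.Finite (MonoidAlgebra ℤ (G ⧸ H)) T := .of_finite
  obtain ⟨n, f, hf⟩ := Module.Finite.exists_fin' (MonoidAlgebra ℤ (G ⧸ H)) T
  let K := (LinearMap.ker f).restrictScalars ℤ
  have eT : ((Fin n → MonoidAlgebra ℤ (G ⧸ H)) ⧸ K) ≃ₗ[ℤ] T :=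
    (f.restrictScalars ℤ).quotKerEquivOfSurjective hf
  have : Finite (_ ⧸ K) := .of_equiv T eT.symm.toEquiv
  have : Module.Finite ℤ (_ ⧸ K) := .of_finite
  refine ⟨n, f, hf, K.free_of_finite_quotient, ?_⟩
  exact K.rank_eq_of_isTorsion_quotient (isAddTorsion_iff_isTorsion_int.mp isAddTorsion_of_finite)
end

section
/- Let k be a field and N a finitely generated module over the Laurent polynomial ring k[t, t⁻¹] on which t − 1 acts invertibly (i.e., multiplication by t − 1 is a bijection N → N). Then N is finite-dimensional as a k-vector space. -/
/-!
Since `t - 1` acts surjectively on the finitely generated module `N`, Nakayama's lemma gives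
`a ≡ 1 mod (t - 1)` with `a • N = 0`, and `a ≠ 0` because `t - 1` is not a unit. So `N` is a
finitely generated module over `k[t,t⁻¹] ⧸ I` for a nonzero ideal `I`, and such a quotient is
finite-dimensional: `I` contains a nonzero polynomial in `t`, so the image of `t` is integral
over `k`, and then its inverse already lies in the finite-dimensional algebra `k[t]`.
-/

open Polynomial LaurentPolynomial

theorem LaurentPolynomial.not_isUnit_T_sub_one {R : Type*} [CommRing R] [Nontrivial R] :
    ¬IsUnit (T 1 - 1 : R[T;T⁻¹]) := by
  intro h
  have := h.map (LaurentPolynomial.eval₂ (RingHom.id R) 1)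
  simp [eval₂_T] at this

theorem Module.annihilator_ne_bot_of_surjective_smul {R M : Type*} [CommRing R] [AddCommGroup M]
    [Module R M] [Module.Finite R M] {r : R} (hr : ¬IsUnit r)
    (hsurj : Function.Surjective fun x : M => r • x) : Module.annihilator R M ≠ ⊥ := by
  have hle : (⊤ : Submodule R M) ≤ Ideal.span {r} • ⊤ := by
    rintro x -
    obtain ⟨y, rfl⟩ := hsurj x
    exact Submodule.smul_mem_smul (Ideal.mem_span_singleton_self r) Submodule.mem_top
  obtain ⟨a, ha1, ha⟩ := Submodule.exists_sub_one_mem_and_smul_eq_zero_of_fg_of_le_smul _ _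
    Module.Finite.fg_top hle
  intro hbot
  have ha0 : a = 0 := by
    rw [← Submodule.mem_bot R, ← hbot, Module.mem_annihilator]
    exact fun m => ha m Submodule.mem_top
  rw [ha0, zero_sub, Ideal.neg_mem_iff, Ideal.mem_span_singleton] at ha1
  exact hr (isUnit_of_dvd_one ha1)

theorem IsIntegral.mem_adjoin_singleton_of_mul_eq_one {K S : Type*} [Field K] [CommRing S]
    [Algebra K S] {x y : S} (hx : IsIntegral K x) (hxy : x * y = 1) :
    y ∈ Algebra.adjoin K {x} := by
  have : Module.Finite K (Algebra.adjoin K {x}) := Algebra.finite_adjoin_simple_of_isIntegral hx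
  have hcancel : IsLeftRegular x := (IsUnit.of_mul_eq_one y hxy).isRegular.left
  let b : Algebra.adjoin K {x} := ⟨x, Algebra.self_mem_adjoin_singleton K x⟩
  have hinj : Function.Injective (LinearMap.mulLeft K b) := fun c d hcd =>
    Subtype.ext (hcancel (congrArg Subtype.val hcd))
  obtain ⟨c, hc⟩ := LinearMap.injective_iff_surjective.mp hinj 1
  have hcy : (c : S) = y := hcancel ((congrArg Subtype.val hc).trans hxy.symm)
  exact hcy ▸ c.2

theorem LaurentPolynomial.finite_quotient_of_ne_bot {k : Type*} [Field k] {I : Ideal k[T;T⁻¹]}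
    (hI : I ≠ ⊥) : Module.Finite k (k[T;T⁻¹] ⧸ I) := by
  let π := Ideal.Quotient.mkₐ k I
  have hπ : ∀ p : k[X], π (toLaurent p) = aeval (π (T 1)) p := fun p => by
    simpa using (aeval_algHom_apply (π.comp toLaurentAlg) X p).symm
  obtain ⟨a, haI, ha0⟩ := Submodule.exists_mem_ne_zero_of_ne_bot hI
  obtain ⟨n, g, hg⟩ := exists_T_pow a
  have hint : IsIntegral k (π (T 1)) := by
    refine IsAlgebraic.isIntegral ⟨g, ?_, ?_⟩
    · rw [← toLaurent_ne_zero, hg]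
      exact fun h => ha0 ((isUnit_T _).mul_left_eq_zero.mp h)
    · rw [← hπ, hg]
      exact Ideal.Quotient.eq_zero_iff_mem.mpr (I.mul_mem_right _ haI)
  have hinv : π (T (-1)) ∈ Algebra.adjoin k {π (T 1)} :=
    hint.mem_adjoin_singleton_of_mul_eq_one (by rw [← map_mul, ← T_add]; simp)
  have hmem : ∀ f, π f ∈ Algebra.adjoin k {π (T 1)} := fun f => by
    induction f using induction_on_mul_T with
    | _ p n =>
      rw [map_mul, hπ, show -(n : ℤ) = n * -1 by ring, ← T_pow, map_pow]
      exact Subalgebra.mul_mem _ (aeval_mem_adjoin_singleton k _) (Subalgebra.pow_mem _ hinv n)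
  have := Algebra.finite_adjoin_simple_of_isIntegral hint
  exact Module.Finite.of_surjective (Algebra.adjoin k {π (T 1)}).val.toLinearMap
    fun s => by
      obtain ⟨f, rfl⟩ := Ideal.Quotient.mkₐ_surjective k I s
      exact ⟨⟨_, hmem f⟩, rfl⟩

theorem Module.Finite.of_finite_quotient_annihilator {k R M : Type*} [CommSemiring k]
    [CommRing R] [Algebra k R] [AddCommGroup M] [Module k M] [Module R M] [IsScalarTower k R M]
    [Module.Finite R M] [Module.Finite k (R ⧸ Module.annihilator R M)] : Module.Finite k M := by
  let := Module.quotientAnnihilator (R := R) (M := M)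
  have hM := Module.isTorsionBySet_annihilator R M
  have : IsScalarTower k (R ⧸ Module.annihilator R M) M := hM.isScalarTower
  have : IsScalarTower R (R ⧸ Module.annihilator R M) M := hM.isScalarTower
  have : Module.Finite (R ⧸ Module.annihilator R M) M :=
    Module.Finite.of_restrictScalars_finite R _ _
  exact Module.Finite.trans (R ⧸ Module.annihilator R M) M

/-- A finitely generated module over the Laurent polynomial ring `k[t,t⁻¹]`
(`k` a field) on which multiplication by `t - 1` is bijective is finite-dimensional
over `k`. -/
theorem finiteDimensional_of_tsubone_invertible
    (k : Type*) [Field k]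
    (N : Type*) [AddCommGroup N] [Module k N] [Module (LaurentPolynomial k) N]
    [IsScalarTower k (LaurentPolynomial k) N]
    (hfg : Module.Finite (LaurentPolynomial k) N)
    (hbij : Function.Bijective fun x : N => (LaurentPolynomial.T 1 - 1 : LaurentPolynomial k) • x) :
    FiniteDimensional k N := by
  have hann : Module.annihilator k[T;T⁻¹] N ≠ ⊥ :=
    Module.annihilator_ne_bot_of_surjective_smul not_isUnit_T_sub_one hbij.surjective
  have := finite_quotient_of_ne_bot hann
  exact Module.Finite.of_finite_quotient_annihilator (R := k[T;T⁻¹])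
end

section
/- Every nonzero finitely generated module over Z[t, t⁻¹] has a nontrivial finite quotient module. That is, if N is a finitely generated Z[t,t⁻¹]-module with N ≠ 0, then there exists a Z[t,t⁻¹]-submodule N' ⊊ N such that N/N' is a nonzero finite module. -/
/-!
A nonzero finitely generated module has a maximal proper submodule, and the quotient by it is
simple, hence isomorphic to `ℤ[t,t⁻¹] ⧸ 𝔪` for a maximal ideal `𝔪`. Since `ℤ` is a Jacobson ring,
Zariski's lemma makes the field `ℤ[t,t⁻¹] ⧸ 𝔪` a finite `ℤ`-module. Being integral over `ℤ`, it
contracts to a maximal ideal `(p)` of `ℤ`, so it is a finite-dimensional `𝔽_p`-vector space.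
-/

open Ideal

theorem Int.jacobson_bot : (⊥ : Ideal ℤ).jacobson = ⊥ := by
  refine eq_bot_iff.mpr fun x hx => ?_
  have h1 := Int.isUnit_iff.mp (mem_jacobson_bot.mp hx 1)
  have h2 := Int.isUnit_iff.mp (mem_jacobson_bot.mp hx 2)
  rw [Ideal.mem_bot]
  omega

theorem isJacobsonRing_of_jacobson_bot {R : Type*} [CommRing R] [Ring.DimensionLEOne R]
    (h : (⊥ : Ideal R).jacobson = ⊥) : IsJacobsonRing R := by
  refine isJacobsonRing_iff_prime_eq.mpr fun P hP => ?_
  rcases eq_or_ne P ⊥ with rfl | hP_ne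
  · exact h
  · have := Ring.DimensionLEOne.maximalOfPrime hP_ne hP
    exact jacobson_eq_self_of_isMaximal

instance Int.isJacobsonRing : IsJacobsonRing ℤ :=
  isJacobsonRing_of_jacobson_bot Int.jacobson_bot

theorem finite_quotient_of_isMaximal_of_finiteType {R A : Type*} [CommRing R] [CommRing A]
    [Algebra R A] [IsJacobsonRing R] [Algebra.FiniteType R A]
    (hR : ∀ p : Ideal R, p.IsMaximal → Finite (R ⧸ p)) (m : Ideal A) [m.IsMaximal] :
    Finite (A ⧸ m) := by
  let := Quotient.field m
  have : Module.Finite R (A ⧸ m) := finite_of_finite_type_of_isJacobsonRing R (A ⧸ m)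
  have : (m.under R).IsMaximal := by
    have := isMaximal_comap_of_isIntegral_of_isMaximal (R := R) (⊥ : Ideal (A ⧸ m))
    rwa [IsScalarTower.algebraMap_eq R A, Quotient.algebraMap_eq, ← comap_comap,
      ← RingHom.ker_eq_comap_bot, mk_ker] at this
  have := hR _ this
  have : Module.Finite (R ⧸ m.under R) (A ⧸ m) := Module.Finite.of_restrictScalars_finite R _ _
  exact Module.finite_of_finite (R ⧸ m.under R)

theorem Int.finite_quotient_of_isMaximal (p : Ideal ℤ) (hp : p.IsMaximal) : Finite (ℤ ⧸ p) :=
  Ring.HasFiniteQuotients.finiteQuotient <|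
    Ring.ne_bot_of_isMaximal_of_not_isField hp Int.not_isField

theorem Submodule.exists_isCoatom_finite_quotient {R M : Type*} [CommRing R] [AddCommGroup M]
    [Module R M] [Module.Finite R M] [Nontrivial M]
    (hR : ∀ p : Ideal R, p.IsMaximal → Finite (R ⧸ p)) :
    ∃ N : Submodule R M, IsCoatom N ∧ Finite (M ⧸ N) := by
  obtain ⟨N, hN, -⟩ := (eq_top_or_exists_le_coatom (⊥ : Submodule R M)).resolve_left bot_ne_top
  have : IsSimpleModule R (M ⧸ N) := isSimpleModule_iff_isCoatom.mpr hN
  obtain ⟨p, hp, ⟨e⟩⟩ := isSimpleModule_iff_quot_maximal.mp this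
  have := hR p hp
  exact ⟨N, hN, .of_equiv _ e.symm.toEquiv⟩

/-- Every nonzero finitely generated module over `ℤ[t,t⁻¹]` has a nontrivial
finite quotient module. -/
theorem exists_finite_nontrivial_quotient
    (N : Type*) [AddCommGroup N] [Module (LaurentPolynomial ℤ) N]
    [Module.Finite (LaurentPolynomial ℤ) N] [Nontrivial N] :
    ∃ N' : Submodule (LaurentPolynomial ℤ) N,
      N' ≠ ⊤ ∧ Finite (N ⧸ N') ∧ Nontrivial (N ⧸ N') := by
  obtain ⟨N', hN', hfin⟩ := Submodule.exists_isCoatom_finite_quotient (M := N) fun p _ =>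
    finite_quotient_of_isMaximal_of_finiteType (R := ℤ) (A := LaurentPolynomial ℤ)
      Int.finite_quotient_of_isMaximal p
  exact ⟨N', hN'.1, hfin, Submodule.Quotient.nontrivial_iff.mpr hN'.1⟩
end
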